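/- Let c, k, n₁, …, n_k be positive integers with c ≥ 2, k ≥ 2, n₁ ≥ 2, and set S = n₁ + n₂ + … + n_k. If (c−1)·⌈(ck(S−k) + (c−1)k)/(c−1)²⌉ is divisible by k, then m_c(K_{2,n₁}, K_{2,n₂}, …, K_{2,n_k}) ≤ ⌈(ck(S−k) + (c−1)k)/(c−1)²⌉. -/

import Mathlib

open Finset Matrix

/-- The complete multipartite graph `K_{c×s}` with `c` partite sets, each of size `s`,
on the vertex set `Fin c × Fin s`. -/
def multiK (c s : ℕ) : SimpleGraph (Fin c × Fin s) where
  Adj v w := v.1 ≠ w.1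
  symm := ⟨fun _ _ h => Ne.symm h⟩
  loopless := ⟨fun _ h => h rfl⟩

/-- The symmetric edge `k`-coloring `C` of the graph `G` contains a monochromatic copy of the
complete bipartite graph `K_{2,n}` in color `i`: there are two distinct vertices `a b` and a
set `S` of `n` further vertices all joined to both `a` and `b` by edges of color `i`. -/
def HasMonoK2 {V : Type*} (G : SimpleGraph V) {k : ℕ}
    (C : V → V → Fin k) (i : Fin k) (n : ℕ) : Prop :=
  ∃ (a b : V) (S : Finset V), a ≠ b ∧ a ∉ S ∧ b ∉ S ∧ S.card = n ∧
    ∀ v ∈ S, G.Adj a v ∧ G.Adj b v ∧ C a v = i ∧ C b v = i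

/-- Every symmetric `k`-coloring of the edges of `K_{c×s}` contains a monochromatic copy of
`K_{2, ns i}` in some color `i`. -/
def ArrowsVec (c s k : ℕ) (ns : Fin k → ℕ) : Prop :=
  ∀ C : (Fin c × Fin s) → (Fin c × Fin s) → Fin k,
    (∀ v w, C v w = C w v) → ∃ i : Fin k, HasMonoK2 (multiK c s) C i (ns i)

/-- Every symmetric `k`-coloring of the edges of `K_{c×s}` contains a monochromatic `K_{2,n}`. -/
def Arrows (c s n k : ℕ) : Prop := ArrowsVec c s k (fun _ => n)

/-- The set multipartite Ramsey number `M_s(K_{2,n}; k)`: the smallest positive integer `c` such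
that every `k`-coloring of the edges of `K_{c×s}` contains a monochromatic `K_{2,n}`. -/
noncomputable def setRamsey (s n k : ℕ) : ℕ := sInf {c : ℕ | 0 < c ∧ Arrows c s n k}

/-- The size multipartite Ramsey number `m_c(K_{2,n}; k)`: the smallest positive integer `s` such
that every `k`-coloring of the edges of `K_{c×s}` contains a monochromatic `K_{2,n}`. -/
noncomputable def sizeRamsey (c n k : ℕ) : ℕ := sInf {s : ℕ | 0 < s ∧ Arrows c s n k}

/-- The size multipartite Ramsey number `m_c(K_{2,n₁},…,K_{2,n_k})`. -/
noncomputable def sizeRamseyVec (c k : ℕ) (ns : Fin k → ℕ) : ℕ :=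
  sInf {s : ℕ | 0 < s ∧ ArrowsVec c s k ns}

/-- All entries of the matrix `H` are `1` or `-1`. -/
def PMOne {ι : Type*} (H : Matrix ι ι ℤ) : Prop := ∀ i j, H i j = 1 ∨ H i j = -1

/-- `H` is an `[α]`-Hadamard matrix: a square `±1` matrix such that `α` is an upper bound for
`|(H * Hᵀ) i j|` over all pairs `i ≠ j`. -/
def IsBHadamard {ι : Type*} [Fintype ι] (α : ℕ) (H : Matrix ι ι ℤ) : Prop :=
  PMOne H ∧ ∀ i j, i ≠ j → |(H * Hᵀ) i j| ≤ (α : ℤ)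

/-- `H` is an `α`-Hadamard matrix: a square `±1` matrix such that `α` is the maximum of
`|(H * Hᵀ) i j|` over all pairs `i ≠ j`. -/
def IsEHadamard {ι : Type*} [Fintype ι] (α : ℕ) (H : Matrix ι ι ℤ) : Prop :=
  IsBHadamard α H ∧ ∃ i j, i ≠ j ∧ |(H * Hᵀ) i j| = (α : ℤ)

/-- `H` is a Hadamard matrix: a square `±1` matrix with `H * Hᵀ = ζ • 1`. -/
def IsHadamard {ι : Type*} [Fintype ι] [DecidableEq ι] (H : Matrix ι ι ℤ) : Prop :=
  PMOne H ∧ H * Hᵀ = (Fintype.card ι : ℤ) • (1 : Matrix ι ι ℤ)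

/-!
Suppose a symmetric `k`-colouring of `K_{c×s}` has no `K_{2,nᵢ}` in colour `i`, and let `dᵢ(v)` be
the number of `i`-coloured edges at `v`. Counting pairs of distinct `i`-neighbours of each vertex,
`∑ᵥ dᵢ(v)(dᵢ(v) - 1)` is the number of ordered pairs `a ≠ b` weighted by their common
`i`-neighbourhood, so it is at most `N(N - 1)(nᵢ - 1)`, where `N = cs`. Since the graph is
`D`-regular with `D = (c - 1)s`, Cauchy–Schwarz gives `k ∑ᵢ dᵢ(v)(dᵢ(v) - 1) ≥ D² - kD` at every
vertex. Together, `N(D² - kD) ≤ kN(N - 1)(S - k)`, which is impossible as soon as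
`(c - 1)²s ≥ ck(S - k) + (c - 1)k`, because then `D² - kD ≥ Nk(S - k)` and `S > k`.
-/

lemma Finset.natCast_card_offDiag {α : Type*} (s : Finset α) :
    (#s.offDiag : ℤ) = #s * (#s - 1) := by
  rw [offDiag_card, Nat.cast_sub (Nat.le_mul_self _)]
  push_cast
  ring

section ColorNeighbors

variable {V : Type*} [Fintype V] (G : SimpleGraph V) [DecidableRel G.Adj]
  {k : ℕ} (C : V → V → Fin k)

def colorNeighborFinset (i : Fin k) (v : V) : Finset V := {w | G.Adj v w ∧ C v w = i}

def commonColorNeighborFinset (i : Fin k) (a b : V) : Finset V :=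
  {v | G.Adj a v ∧ G.Adj b v ∧ C a v = i ∧ C b v = i}

variable {G C}

lemma sum_card_colorNeighborFinset (v : V) :
    ∑ i, #(colorNeighborFinset G C i v) = G.degree v := by
  classical
  rw [← G.card_neighborFinset_eq_degree,
    card_eq_sum_card_fiberwise (f := C v) (t := univ) fun _ _ => mem_univ _]
  congr! 2 with i
  ext w
  simp [colorNeighborFinset]

lemma card_commonColorNeighborFinset_lt {i : Fin k} {n : ℕ} (h : ¬ HasMonoK2 G C i n)
    {a b : V} (hab : a ≠ b) : #(commonColorNeighborFinset G C i a b) < n := by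
  by_contra! hn
  obtain ⟨S, hS, hSn⟩ := exists_subset_card_eq hn
  refine h ⟨a, b, S, hab, fun ha => ?_, fun hb => ?_, hSn, fun v hv => ?_⟩
  · simpa [commonColorNeighborFinset] using hS ha
  · simpa [commonColorNeighborFinset] using hS hb
  · simpa [commonColorNeighborFinset] using hS hv

lemma sum_card_offDiag_colorNeighborFinset (hC : ∀ v w, C v w = C w v) (i : Fin k) :
    ∑ v, #(colorNeighborFinset G C i v).offDiag =
      ∑ p ∈ univ.offDiag, #(commonColorNeighborFinset G C i p.1 p.2) := by
  simp only [card_eq_sum_ones]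
  refine sum_comm' fun v p => ?_
  simp only [colorNeighborFinset, commonColorNeighborFinset, mem_offDiag, mem_filter, mem_univ,
    true_and, G.adj_comm v, hC v]
  tauto

lemma sum_card_offDiag_colorNeighborFinset_le (hC : ∀ v w, C v w = C w v) {i : Fin k} {n : ℕ}
    (h : ¬ HasMonoK2 G C i n) :
    ∑ v, (#(colorNeighborFinset G C i v).offDiag : ℤ) ≤
      Fintype.card V * (Fintype.card V - 1) * (n - 1) := by
  rw [← Nat.cast_sum, sum_card_offDiag_colorNeighborFinset hC, Nat.cast_sum,
    ← card_univ, ← natCast_card_offDiag, ← nsmul_eq_mul]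
  refine sum_le_card_nsmul _ _ _ fun p hp => Int.le_sub_one_of_lt ?_
  exact_mod_cast card_commonColorNeighborFinset_lt h (mem_offDiag.1 hp).2.2

lemma sq_sub_mul_le_sum_card_offDiag_colorNeighborFinset {D : ℕ} (hG : G.IsRegularOfDegree D)
    (v : V) : (D : ℤ) ^ 2 - k * D ≤ k * ∑ i, (#(colorNeighborFinset G C i v).offDiag : ℤ) := by
  have hsum : ∑ i, (#(colorNeighborFinset G C i v) : ℤ) = D := by
    rw [← Nat.cast_sum, sum_card_colorNeighborFinset, hG.degree_eq]
  have hCS := sq_sum_le_card_mul_sum_sq (s := univ)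
    (f := fun i => (#(colorNeighborFinset G C i v) : ℤ))
  rw [card_univ, Fintype.card_fin, hsum] at hCS
  calc (D : ℤ) ^ 2 - k * D
      ≤ k * ∑ i, (#(colorNeighborFinset G C i v) : ℤ) ^ 2 -
          k * ∑ i, (#(colorNeighborFinset G C i v) : ℤ) := by rw [hsum]; linarith
    _ = k * ∑ i, (#(colorNeighborFinset G C i v).offDiag : ℤ) := by
      simp only [natCast_card_offDiag, mul_sub, mul_one, sum_sub_distrib, sq]

theorem card_mul_sq_sub_mul_le_of_forall_not_hasMonoK2 {D : ℕ} (hG : G.IsRegularOfDegree D)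
    (hC : ∀ v w, C v w = C w v) (ns : Fin k → ℕ) (h : ∀ i, ¬ HasMonoK2 G C i (ns i)) :
    (Fintype.card V : ℤ) * (D ^ 2 - k * D) ≤
      k * (Fintype.card V * (Fintype.card V - 1)) * ∑ i, ((ns i : ℤ) - 1) := by
  calc (Fintype.card V : ℤ) * (D ^ 2 - k * D)
      = ∑ _v : V, ((D : ℤ) ^ 2 - k * D) := by rw [sum_const, card_univ, nsmul_eq_mul]
    _ ≤ ∑ v, k * ∑ i, (#(colorNeighborFinset G C i v).offDiag : ℤ) :=
      sum_le_sum fun v _ => sq_sub_mul_le_sum_card_offDiag_colorNeighborFinset hG v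
    _ = k * ∑ i, ∑ v, (#(colorNeighborFinset G C i v).offDiag : ℤ) := by
      rw [← mul_sum, sum_comm]
    _ ≤ k * ∑ i, Fintype.card V * (Fintype.card V - 1) * ((ns i : ℤ) - 1) := by
      gcongr with i
      exact sum_card_offDiag_colorNeighborFinset_le hC (h i)
    _ = _ := by rw [← mul_sum]; ring

end ColorNeighbors

instance (c s : ℕ) : DecidableRel (multiK c s).Adj :=
  fun v w => inferInstanceAs (Decidable (v.1 ≠ w.1))

lemma multiK_isRegularOfDegree (c s : ℕ) : (multiK c s).IsRegularOfDegree ((c - 1) * s) := by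
  intro v
  rw [← SimpleGraph.card_neighborFinset_eq_degree,
    show (multiK c s).neighborFinset v = (univ.erase v.1) ×ˢ univ by
      ext w; simp only [SimpleGraph.mem_neighborFinset, mem_product, mem_erase, mem_univ, and_true]
      exact ne_comm]
  simp

lemma arrowsVec_multiK_of_le {c s k : ℕ} (hc : 0 < c) (ns : Fin k → ℕ)
    (hS : (k : ℤ) < ∑ i, (ns i : ℤ))
    (hs : (c : ℤ) * k * (∑ i, (ns i : ℤ) - k) + ((c : ℤ) - 1) * k ≤ ((c : ℤ) - 1) ^ 2 * s) :
    ArrowsVec c s k ns := by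
  intro C hC
  by_contra! h
  have key :=
    card_mul_sq_sub_mul_le_of_forall_not_hasMonoK2 (multiK_isRegularOfDegree c s) hC ns h
  simp only [Fintype.card_prod, Fintype.card_fin, sum_sub_distrib, sum_const, card_univ,
    nsmul_eq_mul, mul_one] at key
  push_cast [Nat.cast_sub hc] at key
  set T : ℤ := ∑ i, (ns i : ℤ) - k
  have hk : (0 : ℤ) < k := by
    rcases Nat.eq_zero_or_pos k with rfl | hk
    · simp at hS
    · exact_mod_cast hk
  have hkT : 0 < (k : ℤ) * T := mul_pos hk (sub_pos.2 hS)
  have hcZ : (1 : ℤ) ≤ c := by exact_mod_cast hc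
  have hsZ : (0 : ℤ) ≤ s := by positivity
  have hsq : (s : ℤ) * (c * k * T) ≤ ((c - 1) * s) ^ 2 - k * ((c - 1) * s) := by
    nlinarith [mul_le_mul_of_nonneg_left hs hsZ]
  -- with `N = cs`, `key` and `hsq` give `N · NkT ≤ N(N - 1)kT`
  have hcs : (c : ℤ) * s * (k * T) ≤ 0 := by
    nlinarith [mul_le_mul_of_nonneg_left hsq (by positivity : (0 : ℤ) ≤ c * s)]
  have hs0 : c * s = 0 := by
    exact_mod_cast le_antisymm (nonpos_of_mul_nonpos_left hcs hkT) (by positivity)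
  simp only [mul_eq_zero, hc.ne', false_or] at hs0
  subst hs0
  rw [Nat.cast_zero, mul_zero] at hs
  nlinarith [mul_pos (by omega : (0 : ℤ) < c) hkT, mul_nonneg (sub_nonneg.2 hcZ) hk.le]

lemma le_mul_ceil_div {a b : ℤ} (hb : 0 < b) : a ≤ b * ⌈(a : ℚ) / b⌉ := by
  have h := Int.le_ceil ((a : ℚ) / b)
  rw [div_le_iff₀ (by exact_mod_cast hb)] at h
  exact_mod_cast (mul_comm (b : ℚ) _ ▸ h)

/-- **Theorem.** Let `c, k, n₁, …, n_k` be positive integers with `c, k, n₁ ≥ 2` and let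
`S = n₁ + ⋯ + n_k`. If `(c-1) * ⌈(ck(S-k) + (c-1)k)/(c-1)²⌉` is divisible by `k`, then
`m_c(K_{2,n₁}, …, K_{2,n_k}) ≤ ⌈(ck(S-k) + (c-1)k)/(c-1)²⌉`. -/
theorem statement15 (c k : ℕ) (hc : 2 ≤ c) (hk : 2 ≤ k)
    (ns : Fin k → ℕ) (hpos : ∀ i, 1 ≤ ns i) (hn1 : 2 ≤ ns ⟨0, by omega⟩) :
    (sizeRamseyVec c k ns : ℤ) ≤
      ⌈((c : ℚ) * k * ((∑ i, (ns i : ℚ)) - k) + ((c : ℚ) - 1) * k) / ((c : ℚ) - 1) ^ 2⌉ := by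
  have hS : (k : ℤ) < ∑ i, (ns i : ℤ) := by
    calc (k : ℤ) = ∑ _i : Fin k, 1 := by simp
      _ < ∑ i, (ns i : ℤ) := sum_lt_sum (fun i _ => by exact_mod_cast hpos i)
          ⟨_, mem_univ _, by exact_mod_cast hn1⟩
  set A : ℤ := c * k * (∑ i, (ns i : ℤ) - k) + (c - 1) * k
  set B : ℤ := (c - 1) ^ 2
  have hq : ((c : ℚ) * k * ((∑ i, (ns i : ℚ)) - k) + ((c : ℚ) - 1) * k) / ((c : ℚ) - 1) ^ 2 =
      (A : ℚ) / B := by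
    push_cast [A, B]; rfl
  have hcZ : (2 : ℤ) ≤ c := by exact_mod_cast hc
  have hB : 0 < B := pow_pos (by omega) 2
  have hA : 0 < A := by
    have hk0 : (0 : ℤ) < k := by omega
    nlinarith [mul_pos (mul_pos (by omega : (0 : ℤ) < c) hk0) (sub_pos.2 hS)]
  have hqpos : (0 : ℚ) < A / B := div_pos (by exact_mod_cast hA) (by exact_mod_cast hB)
  obtain ⟨s, hs⟩ := Int.eq_ofNat_of_zero_le (Int.ceil_pos.2 hqpos).le
  have hAs : A ≤ B * s := hs ▸ le_mul_ceil_div hB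
  have hs0 : 0 < s := Nat.pos_of_ne_zero fun h => by simp [h] at hAs; omega
  rw [hq, hs]
  exact_mod_cast Nat.sInf_le (show s ∈ {s | 0 < s ∧ ArrowsVec c s k ns} from
    ⟨hs0, arrowsVec_multiK_of_le (by omega) ns hS hAs⟩)
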